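/- arXiv:1610.00702 — 5 statements merged into one kernel-verified Lean document; each statement's English description precedes it below -/
import Mathlib

section
/- In a commutative integral domain D, every ideal that is maximal among the nonzero non-invertible ideals of D is a prime ideal. -/
open scoped nonZeroDivisors

/-- An ideal of a domain is invertible if it is a unit as a fractional ideal. -/
def IsInvertibleIdeal (D : Type*) [CommRing D] [IsDomain D] (I : Ideal D) : Prop :=
  IsUnit (I : FractionalIdeal D⁰ (FractionRing D))

/-- An MNI ideal: maximal among the nonzero non-invertible ideals. -/
def IsMNI (D : Type*) [CommRing D] [IsDomain D] (P : Ideal D) : Prop :=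
  P ≠ ⊥ ∧ ¬ IsInvertibleIdeal D P ∧
    ∀ J : Ideal D, J ≠ ⊥ → ¬ IsInvertibleIdeal D J → P ≤ J → J = P

/-!
If `ab ∈ P` with `a ∉ P`, the ideal `A = P + (a)` strictly contains `P`, so it is invertible.
Invertible ideals divide the ideals they contain, say `P = AQ`; maximality forces `Q = P`,
i.e. `AP = P`. Then `bA ≤ P = PA`, and cancelling the invertible `A` gives `b ∈ P`.
-/

namespace IsInvertibleIdeal

variable {D : Type*} [CommRing D] [IsDomain D]

theorem top : IsInvertibleIdeal D ⊤ := by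
  rw [IsInvertibleIdeal, FractionalIdeal.coeIdeal_top]
  exact isUnit_one

theorem mul {I J : Ideal D} (hI : IsInvertibleIdeal D I) (hJ : IsInvertibleIdeal D J) :
    IsInvertibleIdeal D (I * J) := by
  rw [IsInvertibleIdeal, FractionalIdeal.coeIdeal_mul]
  exact IsUnit.mul hI hJ

theorem le_of_mul_le_mul_right {A I J : Ideal D} (hA : IsInvertibleIdeal D A)
    (h : I * A ≤ J * A) : I ≤ J := by
  obtain ⟨u, hu⟩ := hA
  have hfrac : (I : FractionalIdeal D⁰ (FractionRing D)) * u * ↑u⁻¹ ≤ J * u * ↑u⁻¹ := by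
    rw [hu, ← FractionalIdeal.coeIdeal_mul, ← FractionalIdeal.coeIdeal_mul]
    gcongr
  simpa only [Units.mul_inv_cancel_right, FractionalIdeal.coeIdeal_le_coeIdeal] using hfrac

theorem exists_mul_eq_of_le {A P : Ideal D} (hA : IsInvertibleIdeal D A) (hPA : P ≤ A) :
    ∃ Q : Ideal D, A * Q = P := by
  obtain ⟨u, hu⟩ := hA
  have hle : (↑u⁻¹ : FractionalIdeal D⁰ (FractionRing D)) * P ≤ 1 :=
    calc (↑u⁻¹ : FractionalIdeal D⁰ (FractionRing D)) * P ≤ ↑u⁻¹ * A := by gcongr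
      _ = 1 := by rw [← hu, Units.inv_mul]
  obtain ⟨Q, hQ⟩ := FractionalIdeal.le_one_iff_exists_coeIdeal.mp hle
  refine ⟨Q, FractionalIdeal.coeIdeal_injective (K := FractionRing D) ?_⟩
  simp only [FractionalIdeal.coeIdeal_mul, hQ, ← hu, Units.mul_inv_cancel_left]

end IsInvertibleIdeal

namespace IsMNI

variable {D : Type*} [CommRing D] [IsDomain D] {P A : Ideal D}

theorem isInvertibleIdeal_of_lt (hP : IsMNI D P) (hPA : P < A) : IsInvertibleIdeal D A := by
  by_contra hA
  have hA0 : A ≠ ⊥ := ne_bot_of_gt (lt_of_le_of_lt bot_le hPA)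
  exact hPA.ne (hP.2.2 A hA0 hA hPA.le).symm

theorem mul_eq_self (hP : IsMNI D P) (hA : IsInvertibleIdeal D A) (hPA : P ≤ A) :
    A * P = P := by
  obtain ⟨Q, hQ⟩ := hA.exists_mul_eq_of_le hPA
  have hQ0 : Q ≠ ⊥ := by
    rintro rfl
    exact hP.1 (by rw [← hQ, Ideal.mul_bot])
  have hQP : Q = P :=
    hP.2.2 Q hQ0 (fun hQi => hP.2.1 (hQ ▸ hA.mul hQi)) (hQ ▸ Ideal.mul_le_right)
  rwa [hQP] at hQ

end IsMNI

theorem mni_isPrime (D : Type*) [CommRing D] [IsDomain D]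
    (P : Ideal D) (hP : IsMNI D P) : P.IsPrime := by
  refine ⟨fun hTop => hP.2.1 (hTop ▸ IsInvertibleIdeal.top), fun {a b} hab => ?_⟩
  rw [or_iff_not_imp_left]
  intro ha
  set A := P ⊔ Ideal.span {a}
  have hPA : P < A := left_lt_sup.mpr (mt (Ideal.span_singleton_le_iff_mem _).mp ha)
  have hA : IsInvertibleIdeal D A := hP.isInvertibleIdeal_of_lt hPA
  have hbA : Ideal.span {b} * A ≤ P * A := by
    rw [mul_comm P, hP.mul_eq_self hA hPA.le, Ideal.mul_sup,
      Ideal.span_singleton_mul_span_singleton, sup_le_iff, Ideal.span_singleton_le_iff_mem,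
      mul_comm b]
    exact ⟨Ideal.mul_le_right, hab⟩
  exact (Ideal.span_singleton_le_iff_mem _).mp (hA.le_of_mul_le_mul_right hbA)
end

section
/- In a commutative integral domain D, any two distinct MNI ideals (ideals maximal among the nonzero non-invertible ideals) are comaximal, i.e., their sum is all of D. -/
open scoped nonZeroDivisors

/-!
Let `S = P ⊔ Q`. If `S` is not invertible, maximality of `P` and of `Q` forces `P = S = Q`.
If `S` is invertible, then `S⁻¹P` is an ideal containing `P`; it cannot be invertible (else
`P = S · S⁻¹P` would be), so `S⁻¹P = P`, i.e. `SP = P`, and likewise `SQ = Q`. Hence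
`S² = SP + SQ = S`, and cancelling the unit `S` gives `S = D`.
-/

section

variable {D : Type*} [CommRing D] [IsDomain D]

namespace IsInvertibleIdeal

theorem exists_le_and_eq_mul {S I : Ideal D} (hS : IsInvertibleIdeal D S) (hIS : I ≤ S) :
    ∃ J : Ideal D, I ≤ J ∧ I = S * J := by
  obtain ⟨u, hu⟩ := hS
  have hSu : (S : FractionalIdeal D⁰ (FractionRing D)) * ↑u⁻¹ = 1 := by
    rw [← hu, Units.mul_inv]
  have hu_inv : (1 : FractionalIdeal D⁰ (FractionRing D)) ≤ ↑u⁻¹ :=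
    calc 1 = (S : FractionalIdeal D⁰ (FractionRing D)) * ↑u⁻¹ := hSu.symm
      _ ≤ 1 * ↑u⁻¹ := mul_le_mul_left FractionalIdeal.coeIdeal_le_one _
      _ = ↑u⁻¹ := one_mul _
  have hI_le : (↑u⁻¹ : FractionalIdeal D⁰ (FractionRing D)) * I ≤ 1 :=
    calc (↑u⁻¹ : FractionalIdeal D⁰ (FractionRing D)) * I ≤ ↑u⁻¹ * S :=
          mul_le_mul_right ((FractionalIdeal.coeIdeal_le_coeIdeal _).mpr hIS) _
      _ = 1 := by rw [mul_comm, hSu]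
  obtain ⟨J, hJ⟩ := FractionalIdeal.le_one_iff_exists_coeIdeal.mp hI_le
  refine ⟨J, (FractionalIdeal.coeIdeal_le_coeIdeal (FractionRing D)).mp ?_,
    FractionalIdeal.coeIdeal_injective (K := FractionRing D) ?_⟩
  · calc (I : FractionalIdeal D⁰ (FractionRing D)) = 1 * I := (one_mul _).symm
      _ ≤ ↑u⁻¹ * I := mul_le_mul_left hu_inv _
      _ = J := hJ.symm
  · change (I : FractionalIdeal D⁰ (FractionRing D)) = ↑(S * J)
    rw [FractionalIdeal.coeIdeal_mul, hJ, ← mul_assoc, hSu, one_mul]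

theorem eq_top_of_mul_self {S : Ideal D} (hS : IsInvertibleIdeal D S) (hSS : S * S = S) :
    S = ⊤ := by
  have h : (S : FractionalIdeal D⁰ (FractionRing D)) * S = S := by
    rw [← FractionalIdeal.coeIdeal_mul, hSS]
  rw [← Ideal.one_eq_top]
  exact FractionalIdeal.coeIdeal_eq_one.mp (hS.mul_eq_left.mp h)

end IsInvertibleIdeal

namespace IsMNI

theorem mul_eq_self_of_le {P S : Ideal D} (hP : IsMNI D P) (hS : IsInvertibleIdeal D S)
    (hPS : P ≤ S) : S * P = P := by
  obtain ⟨J, hPJ, hP_eq⟩ := hS.exists_le_and_eq_mul hPS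
  have hJ_ne_bot : J ≠ ⊥ := fun hJ => hP.1 (le_bot_iff.mp (hJ ▸ hPJ))
  have hJ_not_inv : ¬ IsInvertibleIdeal D J := fun hJ => hP.2.1 (hP_eq ▸ hS.mul hJ)
  have hJP : J = P := hP.2.2 J hJ_ne_bot hJ_not_inv hPJ
  rw [hJP] at hP_eq
  exact hP_eq.symm

end IsMNI

end

theorem mni_comaximal (D : Type*) [CommRing D] [IsDomain D]
    (P Q : Ideal D) (hP : IsMNI D P) (hQ : IsMNI D Q) (hPQ : P ≠ Q) :
    P ⊔ Q = ⊤ := by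
  have hne_bot : P ⊔ Q ≠ ⊥ := fun h => hP.1 (le_bot_iff.mp (h ▸ le_sup_left))
  by_cases hS : IsInvertibleIdeal D (P ⊔ Q)
  · refine hS.eq_top_of_mul_self ?_
    rw [Ideal.mul_sup, hP.mul_eq_self_of_le hS le_sup_left, hQ.mul_eq_self_of_le hS le_sup_right]
  · have hSP : P ⊔ Q = P := hP.2.2 _ hne_bot hS le_sup_left
    have hSQ : P ⊔ Q = Q := hQ.2.2 _ hne_bot hS le_sup_right
    exact absurd (hSP.symm.trans hSQ) hPQ
end

section
/- Let D be an integral domain and M an invertible maximal ideal of D. Let Q denote the intersection of the ideals M^n over all n ≥ 1. If for every nonzero element a of D not in Q there exist an integer k ≥ 0 and an ideal U with (a) = M^k·U and U not contained in M, then Q is a prime ideal of D. -/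
open scoped nonZeroDivisors

theorem inf_powers_isPrime (D : Type*) [CommRing D] [IsDomain D]
    (M : Ideal D) (hM : M.IsMaximal) (hMinv : IsInvertibleIdeal D M)
    (Q : Ideal D) (hQ : Q = ⨅ n : ℕ, M ^ (n + 1))
    (hfac : ∀ a : D, a ≠ 0 → a ∉ Q →
      ∃ (k : ℕ) (U : Ideal D), Ideal.span {a} = M ^ k * U ∧ ¬ U ≤ M) :
    Q.IsPrime := by
  have hQle : ∀ n : ℕ, Q ≤ M ^ (n + 1) := by
    intro n; rw [hQ]; exact iInf_le _ n
  constructor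
  · intro htop
    have h1 : (1 : D) ∈ M ^ 1 := hQle 0 (htop ▸ Submodule.mem_top)
    rw [pow_one] at h1
    exact hM.ne_top ((Ideal.eq_top_iff_one _).mpr h1)
  · intro a b hab
    by_contra hcon
    push_neg at hcon
    obtain ⟨ha, hb⟩ := hcon
    have ha0 : a ≠ 0 := fun h => ha (h ▸ Q.zero_mem)
    have hb0 : b ≠ 0 := fun h => hb (h ▸ Q.zero_mem)
    obtain ⟨k, U, hU, hUM⟩ := hfac a ha0 ha
    obtain ⟨l, V, hV, hVM⟩ := hfac b hb0 hb
    have hmem : a * b ∈ M ^ (k + l + 1) := hQle (k + l) hab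
    have hspan : M ^ (k + l) * (U * V) = Ideal.span {a * b} := by
      rw [← Ideal.span_singleton_mul_span_singleton, hU, hV, pow_add]; ring
    have hle : M ^ (k + l) * (U * V) ≤ M ^ (k + l) * M := by
      rw [hspan, ← pow_succ]
      exact (Ideal.span_singleton_le_iff_mem _).mpr hmem
    -- cancel the invertible factor in fractional ideals
    have hu : IsUnit ((M ^ (k + l) : Ideal D) : FractionalIdeal D⁰ (FractionRing D)) := by
      rw [FractionalIdeal.coeIdeal_pow]; exact hMinv.pow _
    obtain ⟨u, hu'⟩ := hu
    have hle' : (u : FractionalIdeal D⁰ (FractionRing D)) * ↑(U * V) ≤ ↑u * ↑M := by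
      rw [hu', ← FractionalIdeal.coeIdeal_mul, ← FractionalIdeal.coeIdeal_mul]
      exact (FractionalIdeal.coeIdeal_le_coeIdeal _).mpr hle
    have hUV : ((U * V : Ideal D) : FractionalIdeal D⁰ (FractionRing D)) ≤ ↑M := by
      have h2 := mul_right_mono (a := (↑u⁻¹ : FractionalIdeal D⁰ (FractionRing D))) hle'
      simpa only [← mul_assoc, u.inv_mul, one_mul] using h2
    have hUVM : U * V ≤ M := (FractionalIdeal.coeIdeal_le_coeIdeal _).mp hUV
    rcases (hM.isPrime.mul_le).mp hUVM with h | h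
    · exact hUM h
    · exact hVM h
end

section
/- In a commutative integral domain, any two invertible prime ideals are incomparable or equal; that is, if P and Q are invertible prime ideals with P properly contained in Q, a contradiction follows. Equivalently: an invertible prime ideal of an integral domain cannot properly contain a nonzero invertible prime ideal. -/
open scoped nonZeroDivisors

/-! An invertible ideal divides every ideal it contains, so `P = Q * L`. As `Q ⊄ P`, primality
of `P` gives `L ≤ P`, hence `Q * P = P`, and cancelling the invertible `P` forces `Q = ⊤`. -/

namespace Ideal

variable {R K : Type*} [CommRing R] [Field K] [Algebra R K] [IsFractionRing R K]

theorem exists_mul_eq_of_le_of_isUnit {I J : Ideal R} (hI : IsUnit (I : FractionalIdeal R⁰ K))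
    (hJI : J ≤ I) : ∃ L : Ideal R, I * L = J := by
  obtain ⟨u, hu⟩ := hI
  have hle : (↑u⁻¹ * J : FractionalIdeal R⁰ K) ≤ 1 := by
    calc (↑u⁻¹ * J : FractionalIdeal R⁰ K) ≤ ↑u⁻¹ * I :=
          mul_le_mul_right ((FractionalIdeal.coeIdeal_le_coeIdeal K).mpr hJI) _
      _ = 1 := by rw [← hu, Units.inv_mul]
  obtain ⟨L, hL⟩ := FractionalIdeal.le_one_iff_exists_coeIdeal.mp hle
  refine ⟨L, FractionalIdeal.coeIdeal_injective (K := K) ?_⟩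
  simp only [FractionalIdeal.coeIdeal_mul, hL, ← hu, Units.mul_inv_cancel_left]

theorem eq_top_of_mul_eq_right_of_isUnit {I J : Ideal R} (hI : IsUnit (I : FractionalIdeal R⁰ K))
    (h : J * I = I) : J = ⊤ := by
  have : (J : FractionalIdeal R⁰ K) * I = 1 * I := by
    rw [← FractionalIdeal.coeIdeal_mul, h, one_mul]
  rw [← one_eq_top, ← FractionalIdeal.coeIdeal_eq_one (K := K)]
  exact hI.mul_left_inj.mp this

theorem mul_eq_right_of_isPrime_of_lt {P Q : Ideal R} (hP : P.IsPrime)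
    (hQ : IsUnit (Q : FractionalIdeal R⁰ K)) (hPQ : P < Q) : Q * P = P := by
  obtain ⟨L, hL⟩ := exists_mul_eq_of_le_of_isUnit hQ hPQ.le
  have hLP : L ≤ P := (hP.mul_le.mp hL.le).resolve_left (not_le_of_gt hPQ)
  exact le_antisymm mul_le_right (hL.ge.trans (mul_mono_right hLP))

end Ideal

theorem invertible_primes_incomparable_general (D : Type*) [CommRing D] [IsDomain D]
    (P Q : Ideal D) (hP : P.IsPrime) (hQ : Q.IsPrime)
    (hPinv : IsInvertibleIdeal D P) (hQinv : IsInvertibleIdeal D Q)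
    (hlt : P < Q) : False :=
  hQ.ne_top (Ideal.eq_top_of_mul_eq_right_of_isUnit hPinv
    (Ideal.mul_eq_right_of_isPrime_of_lt hP hQinv hlt))

theorem invertible_primes_incomparable (D : Type*) [CommRing D] [IsDomain D]
    (P Q : Ideal D) (hP : P.IsPrime) (hQ : Q.IsPrime)
    (hPinv : IsInvertibleIdeal D P) (hQinv : IsInvertibleIdeal D Q)
    (hP0 : P ≠ ⊥) (hlt : P < Q) : False :=
  invertible_primes_incomparable_general D P Q hP hQ hPinv hQinv hlt
end

section
/- Let D be a commutative integral domain and M a maximal ideal of D with M invertible. Then for every nonzero prime ideal P properly contained in M and every n ≥ 1, P ⊆ M^n. -/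
open scoped nonZeroDivisors

/-! Since `M` is invertible, `P ⊆ M` gives `P = M J` with `J = M⁻¹ P`. As `P` is prime and does
not contain `M`, `J ⊆ P`, so `P = M P`; iterating, `P = M ^ n P ⊆ M ^ n`. -/

open FractionalIdeal in
theorem IsInvertibleIdeal.dvd_of_le {D : Type*} [CommRing D] [IsDomain D] {M I : Ideal D}
    (hM : IsInvertibleIdeal D M) (hIM : I ≤ M) : M ∣ I := by
  obtain ⟨u, hu⟩ := hM
  have hle : ↑u⁻¹ * (I : FractionalIdeal D⁰ (FractionRing D)) ≤ 1 :=
    calc ↑u⁻¹ * (I : FractionalIdeal D⁰ (FractionRing D))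
        ≤ ↑u⁻¹ * (M : FractionalIdeal D⁰ (FractionRing D)) := by gcongr
      _ = 1 := by rw [← hu, Units.inv_mul]
  obtain ⟨J, hJ⟩ := le_one_iff_exists_coeIdeal.mp hle
  refine ⟨J, coeIdeal_injective (K := FractionRing D) ?_⟩
  change (I : FractionalIdeal D⁰ (FractionRing D)) = ↑(M * J)
  rw [coeIdeal_mul, hJ, ← hu, ← mul_assoc, Units.mul_inv, one_mul]

namespace Ideal

variable {R : Type*} [CommSemiring R] {M P : Ideal R}

theorem IsPrime.mul_eq_self_of_dvd (hP : P.IsPrime) (hMP : ¬M ≤ P) (hMdvd : M ∣ P) :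
    M * P = P := by
  obtain ⟨J, hJ⟩ := hMdvd
  have hJP : J ≤ P := (hP.mul_le.mp hJ.ge).resolve_left hMP
  refine le_antisymm mul_le_right ?_
  calc P = M * J := hJ
    _ ≤ M * P := mul_mono_right hJP

theorem le_pow_of_mul_eq_self (h : M * P = P) (n : ℕ) : P ≤ M ^ n := by
  induction n with
  | zero => simp
  | succ n ih =>
    calc P = M * P := h.symm
      _ ≤ M * M ^ n := mul_mono_right ih
      _ = M ^ (n + 1) := (pow_succ' M n).symm

end Ideal

theorem prime_le_powers_of_invertible_maximal_general (D : Type*) [CommRing D] [IsDomain D]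
    (M : Ideal D) (hMinv : IsInvertibleIdeal D M)
    (P : Ideal D) (hP : P.IsPrime) (hPM : P < M) :
    ∀ n : ℕ, 1 ≤ n → P ≤ M ^ n := fun n _ =>
  Ideal.le_pow_of_mul_eq_self (hP.mul_eq_self_of_dvd hPM.not_ge (hMinv.dvd_of_le hPM.le)) n

theorem prime_le_powers_of_invertible_maximal (D : Type*) [CommRing D] [IsDomain D]
    (M : Ideal D) (hM : M.IsMaximal) (hMinv : IsInvertibleIdeal D M)
    (P : Ideal D) (hP : P.IsPrime) (hP0 : P ≠ ⊥) (hPM : P < M) :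
    ∀ n : ℕ, 1 ≤ n → P ≤ M ^ n :=
  prime_le_powers_of_invertible_maximal_general D M hMinv P hP hPM
end
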